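/- arXiv:2101.02256 — 2 statements merged into one kernel-verified Lean document; each statement's English description precedes it below -/
import Mathlib

section
/- If $A = I + B$ with $B$ an $n\times n$ positive semidefinite symmetric real matrix, then $\|A^{-1}\|_\infty \leq \frac{\sqrt{n}+1}{2}$, where $\|\cdot\|_\infty$ is the operator norm induced by the $\ell_\infty$ vector norm. -/
/-- The ℓ∞-induced operator norm of a matrix (the Pi norm on `Fin n → ℝ` is the
sup norm). -/
noncomputable def matOpNormInf {m n : ℕ} (A : Matrix (Fin m) (Fin n) ℝ) : ℝ :=
  ‖LinearMap.toContinuousLinearMap A.mulVecLin‖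

/-!
Write `C = (1 + B)⁻¹`. Since `C - C² = C B C` is positive semidefinite and `C` is
symmetric, every row `x` of `C` satisfies `∑ⱼ xⱼ² ≤ xᵢ`, where `i` is the diagonal index.
Then `t = xᵢ` lies in `[0, 1]`, and by Cauchy–Schwarz the remaining `n - 1` entries have
`ℓ¹` norm `r ≤ √((n - 1)(t - t²))`; maximizing `t + r` over `t` gives `(√n + 1)/2`, which
bounds every absolute row sum of `C`, i.e. its `ℓ∞` operator norm.
-/

open Matrix Finset

theorem matOpNormInf_le_of_sum_abs_le {m n : ℕ} (A : Matrix (Fin m) (Fin n) ℝ) {c : ℝ}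
    (hc : 0 ≤ c) (h : ∀ i, ∑ j, |A i j| ≤ c) : matOpNormInf A ≤ c := by
  let _ := Matrix.linftyOpNormedAddCommGroup (m := Fin m) (n := Fin n) (α := ℝ)
  calc matOpNormInf A = ‖A‖ := (linfty_opNorm_eq_opNorm A).symm
    _ ≤ c := by
      rw [linfty_opNorm_def, ← NNReal.coe_mk c hc, NNReal.coe_le_coe]
      refine Finset.sup_le fun i _ => ?_
      rw [← NNReal.coe_le_coe]
      simpa using h i

theorem Matrix.PosSemidef.sum_sq_inv_one_add_le {n : Type*} [Fintype n] [DecidableEq n]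
    {B : Matrix n n ℝ} (hB : B.PosSemidef) (i : n) :
    ∑ j, ((1 + B)⁻¹ i j) ^ 2 ≤ (1 + B)⁻¹ i i := by
  set C := (1 + B)⁻¹
  have hA : (1 + B).PosDef := PosDef.one.add_posSemidef hB
  have hC : C.IsHermitian := hA.inv.isHermitian
  have hCB : C * B = 1 - C := by
    rw [eq_sub_iff_add_eq, ← mul_one C, mul_assoc, one_mul, ← mul_add, add_comm B]
    exact nonsing_inv_mul _ (isUnit_iff_ne_zero.mpr hA.det_pos.ne')
  have hdiag : 0 ≤ (C - C * C) i i := by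
    simpa only [hC.eq, hCB, sub_mul, one_mul] using (hB.conjTranspose_mul_mul_same C).diag_nonneg
  calc ∑ j, C i j ^ 2 = (C * C) i i := by
        refine Finset.sum_congr rfl fun j _ => ?_
        simp only [sq, ← hC.apply i j, star_trivial]
    _ ≤ C i i := sub_nonneg.mp hdiag

/-- With `u = 2t - 1`, `(s - u)² - (s² - 1)(1 - u²) = (su - 1)²`. -/
theorem add_le_of_sq_le_mul_sub_sq {r s t : ℝ} (hs : 1 ≤ s) (ht : t ^ 2 ≤ t)
    (h : r ^ 2 ≤ (s ^ 2 - 1) * (t - t ^ 2)) : t + r ≤ (s + 1) / 2 := by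
  have hsq : (2 * r) ^ 2 ≤ (s - (2 * t - 1)) ^ 2 := by nlinarith [sq_nonneg (s * (2 * t - 1) - 1)]
  have hpos : 0 ≤ s - (2 * t - 1) := by nlinarith
  nlinarith

theorem sum_abs_le_of_sum_sq_le {ι : Type*} [Fintype ι] [DecidableEq ι] {x : ι → ℝ} (i : ι)
    (h : ∑ j, x j ^ 2 ≤ x i) : ∑ j, |x j| ≤ (√(Fintype.card ι) + 1) / 2 := by
  set r := ∑ j ∈ univ.erase i, |x j|
  have hsplit : ∑ j, |x j| = |x i| + r := (add_sum_erase _ _ (mem_univ i)).symm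
  have hsq : ∑ j, x j ^ 2 = x i ^ 2 + ∑ j ∈ univ.erase i, |x j| ^ 2 := by
    simp only [sq_abs]; exact (add_sum_erase _ _ (mem_univ i)).symm
  have hcard : ((univ.erase i).card : ℝ) = √(Fintype.card ι) ^ 2 - 1 := by
    rw [card_erase_of_mem (mem_univ i), card_univ, Real.sq_sqrt (Nat.cast_nonneg _),
      Nat.cast_pred (Fintype.card_pos_iff.mpr ⟨i⟩)]
  have hoff : ∑ j ∈ univ.erase i, |x j| ^ 2 ≤ x i - x i ^ 2 := by linarith
  have hCS : r ^ 2 ≤ (√(Fintype.card ι) ^ 2 - 1) * (x i - x i ^ 2) := by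
    rw [← hcard]
    exact sq_sum_le_card_mul_sum_sq.trans (by gcongr)
  have hxi2 : x i ^ 2 ≤ x i := by
    linarith [sum_nonneg fun j (_ : j ∈ univ.erase i) => sq_nonneg |x j|]
  have hxi : 0 ≤ x i := (sq_nonneg _).trans hxi2
  have hs : 1 ≤ √(Fintype.card ι) :=
    Real.one_le_sqrt.mpr (by exact_mod_cast Fintype.card_pos_iff.mpr ⟨i⟩)
  rw [hsplit, abs_of_nonneg hxi]
  exact add_le_of_sq_le_mul_sub_sq hs hxi2 hCS

/-- If `A = I + B` with `B` an `n × n` positive semidefinite symmetric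
real matrix, then `‖A⁻¹‖_∞ ≤ (√n + 1)/2`. -/
theorem stmt_6 {n : ℕ} (B : Matrix (Fin n) (Fin n) ℝ) (hB : B.PosSemidef) :
    matOpNormInf (1 + B)⁻¹ ≤ (Real.sqrt n + 1) / 2 := by
  refine matOpNormInf_le_of_sum_abs_le _ (by positivity) fun i => ?_
  simpa using sum_abs_le_of_sum_sq_le i (hB.sum_sq_inv_one_add_le i)
end

section
/- Let $A$ be a positive definite $n\times n$ matrix and $b \in \mathbb{R}^n$. If $x^*$ solves $A x = b$ and $\bar{x}$ solves $A\bar{x} = b + e$ for some perturbation vector $e$, then $\|\bar{x} - x^*\|_\infty \leq \|A^{-1}\|_\infty \, \|e\|_\infty \leq \frac{\sqrt{n}+1}{2\lambda_{\min}} \|e\|_\infty$, where $\lambda_{\min}$ is the smallest eigenvalue of $A$. -/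
open Matrix Finset

theorem add_le_of_sq_le_mul_sub_sq_s12 {k a ρ : ℝ} (hk : 0 ≤ k) (ha : a ^ 2 ≤ a)
    (hρ : ρ ^ 2 ≤ k * (a - a ^ 2)) : a + ρ ≤ (√(k + 1) + 1) / 2 := by
  suffices (2 * a - 1 + 2 * ρ) ^ 2 ≤ k + 1 by linarith [Real.le_sqrt_of_sq_le this]
  rcases hk.eq_or_lt with rfl | hk
  · nlinarith
  -- Cauchy–Schwarz for the vectors `(1, √k)` and `(2a - 1, 2ρ / √k)`, cleared of `√k`.
  · refine le_of_mul_le_mul_left ?_ hk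
    nlinarith [sq_nonneg (2 * ρ - k * (2 * a - 1))]

theorem sum_abs_le_of_mul_dotProduct_self_le {ι : Type*} [Fintype ι] [DecidableEq ι] {lam : ℝ}
    (hlam : 0 < lam) {r : ι → ℝ} {i : ι} (h : lam * (r ⬝ᵥ r) ≤ r i) :
    ∑ j, |r j| ≤ (√(Fintype.card ι) + 1) / (2 * lam) := by
  set s := univ.erase i
  set Q := ∑ j ∈ s, r j ^ 2
  set R := ∑ j ∈ s, |r j|
  have hQ : 0 ≤ Q := sum_nonneg fun _ _ ↦ sq_nonneg _
  have hdot : r ⬝ᵥ r = r i ^ 2 + Q := by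
    simp only [dotProduct, ← sq, Q, s]
    exact (add_sum_erase _ _ (mem_univ i)).symm
  have hri : 0 ≤ r i := le_trans (by rw [hdot]; positivity) h
  have hsum : ∑ j, |r j| = r i + R := by
    rw [← add_sum_erase _ _ (mem_univ i), abs_of_nonneg hri]
  have hcard : (Fintype.card ι : ℝ) = #s + 1 := by
    exact_mod_cast (card_erase_add_one (mem_univ i)).symm
  have hCS : R ^ 2 ≤ #s * Q := by
    simpa only [sq_abs] using sq_sum_le_card_mul_sum_sq (s := s) (f := fun j ↦ |r j|)
  have hlamQ : lam ^ 2 * Q ≤ lam * r i - (lam * r i) ^ 2 := by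
    rw [hdot] at h
    nlinarith
  have hρ : (lam * R) ^ 2 ≤ #s * (lam * r i - (lam * r i) ^ 2) := by
    nlinarith [mul_le_mul_of_nonneg_left hCS (sq_nonneg lam),
      mul_le_mul_of_nonneg_left hlamQ (Nat.cast_nonneg' #s)]
  have key := add_le_of_sq_le_mul_sub_sq_s12 (by positivity) (by nlinarith) hρ
  rw [hsum, hcard, le_div_iff₀ (by positivity)]
  linarith

open scoped MatrixOrder in
theorem Matrix.IsHermitian.mul_dotProduct_self_le {ι : Type*} [Fintype ι] [DecidableEq ι]
    {A : Matrix ι ι ℝ} (hA : A.IsHermitian) {lam : ℝ} (hle : ∀ i, lam ≤ hA.eigenvalues i)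
    (y : ι → ℝ) : lam * (y ⬝ᵥ y) ≤ y ⬝ᵥ (A *ᵥ y) := by
  have hlamA : algebraMap ℝ _ lam ≤ A := by
    rw [algebraMap_le_iff_le_spectrum (a := A) hA, hA.spectrum_real_eq_range_eigenvalues]
    rintro _ ⟨i, rfl⟩
    exact hle i
  simpa [sub_mulVec, Algebra.algebraMap_eq_smul_one, smul_mulVec, dotProduct_smul] using
    (le_iff.mp hlamA).dotProduct_mulVec_nonneg y

theorem Matrix.IsHermitian.sum_abs_le_of_mul_eq_one {ι : Type*} [Fintype ι] [DecidableEq ι]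
    {A M : Matrix ι ι ℝ} (hA : A.IsHermitian) {lam : ℝ} (hlam : 0 < lam)
    (hle : ∀ i, lam ≤ hA.eigenvalues i) (hMA : M * A = 1) (i : ι) :
    ∑ j, |M i j| ≤ (√(Fintype.card ι) + 1) / (2 * lam) := by
  have hrow : M i ᵥ* A = Pi.single i 1 := by
    ext j
    exact (congrFun (congrFun hMA i) j).trans one_eq_pi_single
  refine sum_abs_le_of_mul_dotProduct_self_le hlam (i := i) ?_
  calc lam * (M i ⬝ᵥ M i) ≤ M i ⬝ᵥ (A *ᵥ M i) := hA.mul_dotProduct_self_le hle (M i)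
    _ = M i i := by rw [dotProduct_mulVec, hrow, single_one_dotProduct]

theorem matOpNormInf_le_of_forall_sum_abs_le {m n : ℕ} {M : Matrix (Fin m) (Fin n) ℝ} {C : ℝ}
    (hC : 0 ≤ C) (h : ∀ i, ∑ j, |M i j| ≤ C) : matOpNormInf M ≤ C := by
  let := Matrix.linftyOpNormedAddCommGroup (m := Fin m) (n := Fin n) (α := ℝ)
  rw [show matOpNormInf M = ‖M‖ from (linfty_opNorm_eq_opNorm M).symm, linfty_opNorm_def,
    ← Real.coe_toNNReal C hC, NNReal.coe_le_coe, Finset.sup_le_iff]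
  intro i _
  rw [← NNReal.coe_le_coe, NNReal.coe_sum, Real.coe_toNNReal C hC]
  simpa using h i

theorem norm_mulVec_le_matOpNormInf {m n : ℕ} (M : Matrix (Fin m) (Fin n) ℝ) (v : Fin n → ℝ) :
    ‖M *ᵥ v‖ ≤ matOpNormInf M * ‖v‖ :=
  (LinearMap.toContinuousLinearMap M.mulVecLin).le_opNorm v

theorem stmt_12_general {n : ℕ} (A : Matrix (Fin n) (Fin n) ℝ) (hA : A.PosDef)
    (lam : ℝ) (hle : ∀ i, lam ≤ hA.1.eigenvalues i) (hex : ∃ i, hA.1.eigenvalues i = lam)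
    (b e xstar xbar : Fin n → ℝ)
    (hxstar : A.mulVec xstar = b) (hxbar : A.mulVec xbar = b + e) :
    ‖xbar - xstar‖ ≤ matOpNormInf A⁻¹ * ‖e‖ ∧
    matOpNormInf A⁻¹ * ‖e‖ ≤ (Real.sqrt n + 1) / (2 * lam) * ‖e‖ := by
  obtain ⟨i, hi⟩ := hex
  have hlam : 0 < lam := hi ▸ hA.eigenvalues_pos i
  have hinv : A⁻¹ * A = 1 := nonsing_inv_mul A hA.det_pos.ne'.isUnit
  have hdiff : xbar - xstar = A⁻¹ *ᵥ e :=
    calc xbar - xstar = (A⁻¹ * A) *ᵥ (xbar - xstar) := by rw [hinv, one_mulVec]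
      _ = A⁻¹ *ᵥ e := by rw [← mulVec_mulVec, mulVec_sub, hxbar, hxstar, add_sub_cancel_left]
  have hnorm : matOpNormInf A⁻¹ ≤ (Real.sqrt n + 1) / (2 * lam) := by
    simpa using matOpNormInf_le_of_forall_sum_abs_le (by positivity)
      (hA.1.sum_abs_le_of_mul_eq_one hlam hle hinv)
  exact ⟨hdiff ▸ norm_mulVec_le_matOpNormInf _ e, by gcongr⟩

/-- Let `A` be a positive definite `n × n` real matrix with smallest
eigenvalue `lam` and `b ∈ ℝⁿ`. If `A x* = b` and `A x̄ = b + e`, then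
`‖x̄ - x*‖_∞ ≤ ‖A⁻¹‖_∞ ‖e‖_∞ ≤ ((√n + 1)/(2 lam)) ‖e‖_∞`. -/
theorem stmt_12 {n : ℕ} (hn : 1 ≤ n) (A : Matrix (Fin n) (Fin n) ℝ) (hA : A.PosDef)
    (lam : ℝ) (hle : ∀ i, lam ≤ hA.1.eigenvalues i) (hex : ∃ i, hA.1.eigenvalues i = lam)
    (b e xstar xbar : Fin n → ℝ)
    (hxstar : A.mulVec xstar = b) (hxbar : A.mulVec xbar = b + e) :
    ‖xbar - xstar‖ ≤ matOpNormInf A⁻¹ * ‖e‖ ∧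
    matOpNormInf A⁻¹ * ‖e‖ ≤ (Real.sqrt n + 1) / (2 * lam) * ‖e‖ :=
  stmt_12_general A hA lam hle hex b e xstar xbar hxstar hxbar
end
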